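/- Let w be analytic on the open unit disk U with w(0) = 0 and a zero of order at least n ≥ 1 at 0, let c ∈ ℂ with c ≠ 0, ρ > 1, and suppose 1 + c w(z) ≠ 0 on U. If |c z w'(z) / (1 + c w(z))| < |c| n ρ / (1 + |c| ρ) for all z ∈ U, then |w(z)| < ρ for all z ∈ U. -/

import Mathlib

/-!
Put `u = 1 + c w`. Since `u' = c w'` vanishes to order `n - 1` at `0`, the function `z u'/u` is
`z ^ n` times a holomorphic function, so the maximum modulus principle (as in Schwarz's lemma)
turns the hypothesis `|z u'/u| < M`, `M = |c| n ρ / (1 + |c| ρ)`, into `|u'/u| ≤ M |z| ^ (n - 1)`.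
Integrating along radii, the holomorphic logarithm `L` of `u` with `L 0 = 0` satisfies
`|L z| ≤ M |z| ^ n / n < x / (1 + x)` with `x = |c| ρ`, and then
`|c w| = |exp L - 1| ≤ exp |L| - 1 < exp (x / (1 + x)) - 1 ≤ x` because `x / (1 + x) ≤ log (1 + x)`.
-/

open Complex Metric Set Function

theorem exists_eq_sub_pow_mul_of_iteratedDeriv_eq_zero {U : Set ℂ} (hU : IsOpen U) {z₀ : ℂ}
    (hz₀ : z₀ ∈ U) {f : ℂ → ℂ} (hf : DifferentiableOn ℂ f U) {n : ℕ}
    (hzero : ∀ k < n, iteratedDeriv k f z₀ = 0) :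
    ∃ g : ℂ → ℂ, DifferentiableOn ℂ g U ∧ ∀ z, f z = (z - z₀) ^ n * g z := by
  obtain ⟨p, r, hp⟩ := hf.analyticAt (hU.mem_nhds hz₀)
  have hcoeff : ∀ k < n, (swap dslope z₀)^[k] f z₀ = 0 := by
    intro k hk
    have hpk : k.factorial • p.coeff k = 0 := by
      simpa [← iteratedDeriv_eq_iteratedFDeriv, hzero k hk] using hp.factorial_smul 1 k
    rw [← (hp.hasFPowerSeriesAt.has_fpower_series_iterate_dslope_fslope k).coeff_zero 1,
      ← FormalMultilinearSeries.coeff, FormalMultilinearSeries.coeff_iterate_fslope, zero_add]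
    simpa [k.factorial_ne_zero] using hpk
  have hdiff : ∀ k, DifferentiableOn ℂ ((swap dslope z₀)^[k] f) U := by
    intro k
    induction k with
    | zero => exact hf
    | succ k ih =>
      rw [iterate_succ_apply']
      exact (differentiableOn_dslope (hU.mem_nhds hz₀)).mpr ih
  exact ⟨_, hdiff n, fun z => (pow_sub_smul_iterate_dslope_of_zero n hcoeff z).symm⟩

theorem norm_le_of_forall_norm_pow_mul_le {ψ : ℂ → ℂ} (hψ : DifferentiableOn ℂ ψ (ball 0 1))
    {n : ℕ} {M : ℝ} (h : ∀ z ∈ ball (0 : ℂ) 1, ‖z ^ n * ψ z‖ ≤ M) {z : ℂ}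
    (hz : z ∈ ball (0 : ℂ) 1) : ‖ψ z‖ ≤ M := by
  rw [mem_ball_zero_iff] at hz
  have hscaled : ∀ s ∈ Ioo ‖z‖ 1, ‖ψ z‖ * s ^ n ≤ M := by
    intro s hs
    have hs0 : 0 < s := (norm_nonneg z).trans_lt hs.1
    have hfrontier : ∀ ζ ∈ frontier (ball (0 : ℂ) s), ‖ψ ζ‖ ≤ M / s ^ n := by
      intro ζ hζ
      rw [frontier_ball 0 hs0.ne', mem_sphere_zero_iff_norm] at hζ
      have hζM := h ζ (mem_ball_zero_iff.mpr (hζ.trans_lt hs.2))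
      rw [norm_mul, norm_pow, hζ] at hζM
      rw [le_div_iff₀ (pow_pos hs0 n)]
      linarith
    have hmax := norm_le_of_forall_mem_frontier_norm_le isBounded_ball
      (hψ.diffContOnCl_ball (closedBall_subset_ball hs.2)) hfrontier
      (subset_closure (mem_ball_zero_iff.mpr hs.1))
    rwa [le_div_iff₀ (pow_pos hs0 n)] at hmax
  have hlim : Filter.Tendsto (fun s : ℝ => ‖ψ z‖ * s ^ n) (nhdsWithin 1 (Iio 1)) (nhds ‖ψ z‖) := by
    simpa only [one_pow, mul_one] using
      (((continuous_pow n).tendsto (1 : ℝ)).const_mul ‖ψ z‖).mono_left nhdsWithin_le_nhds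
  exact le_of_tendsto hlim (Filter.mem_of_superset (Ioo_mem_nhdsLT hz) hscaled)

theorem norm_logDeriv_le_of_norm_mul_logDeriv_le {u : ℂ → ℂ}
    (hu : DifferentiableOn ℂ u (ball 0 1)) (hu0 : ∀ z ∈ ball (0 : ℂ) 1, u z ≠ 0) {m : ℕ}
    (hzero : ∀ k < m, iteratedDeriv (k + 1) u 0 = 0) {M : ℝ}
    (h : ∀ z ∈ ball (0 : ℂ) 1, ‖z * logDeriv u z‖ ≤ M) {z : ℂ} (hz : z ∈ ball (0 : ℂ) 1) :
    ‖logDeriv u z‖ ≤ M * ‖z‖ ^ m := by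
  obtain ⟨g, hg, hderiv⟩ := exists_eq_sub_pow_mul_of_iteratedDeriv_eq_zero isOpen_ball
    (mem_ball_self one_pos) (hu.deriv isOpen_ball) fun k hk => by
      rw [← iteratedDeriv_succ']
      exact hzero k hk
  have hfactor : ∀ ζ, logDeriv u ζ = ζ ^ m * (g ζ / u ζ) := fun ζ => by
    rw [logDeriv_apply, hderiv, sub_zero, mul_div_assoc]
  have hquot : ‖g z / u z‖ ≤ M := by
    refine norm_le_of_forall_norm_pow_mul_le (ψ := fun ζ => g ζ / u ζ) (n := m + 1)
      (hg.div hu hu0) (fun ζ hζ => ?_) hz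
    rw [pow_succ', mul_assoc, ← hfactor]
    exact h ζ hζ
  rw [hfactor, norm_mul, norm_pow, mul_comm]
  gcongr

theorem norm_le_of_norm_deriv_le_mul_norm_pow {s : Set ℂ} (hs : StarConvex ℝ 0 s) {L L' : ℂ → ℂ}
    (hL : ∀ z ∈ s, HasDerivAt L (L' z) z) (hL0 : L 0 = 0) {K : ℝ} {m : ℕ}
    (hbound : ∀ z ∈ s, ‖L' z‖ ≤ K * ‖z‖ ^ m) {z : ℂ} (hz : z ∈ s) :
    ‖L z‖ ≤ K * ‖z‖ ^ (m + 1) / (m + 1) := by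
  have hseg : ∀ t ∈ Icc (0 : ℝ) 1, (t : ℂ) * z ∈ s := fun t ht => by
    simpa [Complex.real_smul] using hs.smul_mem hz ht.1 ht.2
  have hderiv : ∀ t ∈ Icc (0 : ℝ) 1,
      HasDerivAt (fun t : ℝ => L (t * z)) (L' (t * z) * z) t := fun t ht =>
    ((hL _ (hseg t ht)).comp (t : ℂ) (hasDerivAt_mul_const z)).comp_ofReal
  have hB : ∀ t : ℝ, HasDerivAt (fun t : ℝ => K * ‖z‖ ^ (m + 1) * t ^ (m + 1) / (m + 1))
      (K * ‖z‖ ^ (m + 1) * t ^ m) t := fun t => by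
    refine (((hasDerivAt_pow (m + 1) t).const_mul (K * ‖z‖ ^ (m + 1))).div_const
      ((m : ℝ) + 1)).congr_deriv ?_
    rw [Nat.add_sub_cancel]
    push_cast
    field_simp
  have hderiv_le : ∀ t ∈ Ico (0 : ℝ) 1, ‖L' (t * z) * z‖ ≤ K * ‖z‖ ^ (m + 1) * t ^ m := by
    intro t ht
    have hbt := hbound _ (hseg t (Ico_subset_Icc_self ht))
    rw [norm_mul, Complex.norm_real, Real.norm_of_nonneg ht.1, mul_pow] at hbt
    rw [norm_mul]
    calc ‖L' (t * z)‖ * ‖z‖ ≤ K * (t ^ m * ‖z‖ ^ m) * ‖z‖ := by gcongr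
      _ = K * ‖z‖ ^ (m + 1) * t ^ m := by ring
  simpa using image_norm_le_of_norm_deriv_right_le_deriv_boundary
    (fun t ht => (hderiv t ht).continuousAt.continuousWithinAt)
    (fun t ht => (hderiv t (Ico_subset_Icc_self ht)).hasDerivWithinAt) (by simp [hL0]) hB
    hderiv_le (right_mem_Icc.mpr zero_le_one)

theorem eq_exp_of_hasDerivAt_logDeriv {U : Set ℂ} (hU : IsOpen U) (hU' : IsPreconnected U)
    {u L : ℂ → ℂ} (hu : DifferentiableOn ℂ u U) (hu0 : ∀ z ∈ U, u z ≠ 0)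
    (hL : ∀ z ∈ U, HasDerivAt L (logDeriv u z) z) {z₀ : ℂ} (hz₀ : z₀ ∈ U)
    (h : u z₀ = exp (L z₀)) {z : ℂ} (hz : z ∈ U) : u z = exp (L z) := by
  have hderiv : ∀ ζ ∈ U, HasDerivAt (fun ζ => u ζ * exp (-L ζ)) 0 ζ := by
    intro ζ hζ
    refine (((hu.differentiableAt (hU.mem_nhds hζ)).hasDerivAt).mul
      (hL ζ hζ).neg.cexp).congr_deriv ?_
    rw [logDeriv_apply]
    field_simp [hu0 ζ hζ]
    ring
  have hconst := hU.is_const_of_deriv_eq_zero hU'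
    (fun ζ hζ => (hderiv ζ hζ).differentiableAt.differentiableWithinAt)
    (fun ζ hζ => (hderiv ζ hζ).deriv) hz hz₀
  rw [h, ← exp_add, add_neg_cancel, exp_zero, exp_neg, mul_inv_eq_one₀ (exp_ne_zero _)] at hconst
  exact hconst

theorem exists_eq_exp_of_norm_logDeriv_le {r : ℝ} {u : ℂ → ℂ}
    (hu : DifferentiableOn ℂ u (ball 0 r)) (hu0 : ∀ z ∈ ball (0 : ℂ) r, u z ≠ 0) (hu1 : u 0 = 1)
    {K : ℝ} {m : ℕ} (hbound : ∀ z ∈ ball (0 : ℂ) r, ‖logDeriv u z‖ ≤ K * ‖z‖ ^ m) {z : ℂ}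
    (hz : z ∈ ball (0 : ℂ) r) :
    ∃ ξ, u z = exp ξ ∧ ‖ξ‖ ≤ K * ‖z‖ ^ (m + 1) / (m + 1) := by
  have hr : 0 < r := pos_of_mem_ball hz
  have hlogDeriv_diff : DifferentiableOn ℂ (logDeriv u) (ball 0 r) :=
    (hu.deriv isOpen_ball).div hu hu0
  obtain ⟨L, hL0, hL⟩ := hlogDeriv_diff.isExactOn_ball.with_val_at 0 0
  refine ⟨L z, eq_exp_of_hasDerivAt_logDeriv isOpen_ball (convex_ball 0 r).isPreconnected hu hu0
    hL (mem_ball_self hr) (by rw [hu1, hL0, exp_zero]) hz, ?_⟩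
  exact norm_le_of_norm_deriv_le_mul_norm_pow ((convex_ball 0 r).starConvex (mem_ball_self hr))
    hL hL0 hbound hz

theorem norm_exp_sub_one_lt_of_norm_lt {ξ : ℂ} {x : ℝ} (hx : 0 ≤ x) (hξ : ‖ξ‖ < x / (1 + x)) :
    ‖exp ξ - 1‖ < x := by
  have hlog : x / (1 + x) ≤ Real.log (1 + x) := by
    convert Real.one_sub_inv_le_log_of_pos (by linarith : 0 < 1 + x) using 1
    field_simp
    ring
  calc ‖exp ξ - 1‖ ≤ Real.exp ‖ξ‖ - 1 := by
        simpa using norm_exp_sub_sum_le_exp_norm_sub_sum ξ 1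
    _ < Real.exp (x / (1 + x)) - 1 := by gcongr
    _ ≤ x := by
        have := Real.exp_le_exp.mpr hlog
        rw [Real.exp_log (by linarith)] at this
        linarith

theorem core1 (n : ℕ) (hn : 1 ≤ n) (w : ℂ → ℂ)
    (hw : AnalyticOn ℂ w (ball (0 : ℂ) 1))
    (hzero : ∀ k < n, iteratedDeriv k w 0 = 0)
    (c : ℂ) (hc : c ≠ 0) (ρ : ℝ) (hρ : 1 < ρ)
    (hden : ∀ z ∈ ball (0 : ℂ) 1, 1 + c * w z ≠ 0)
    (h : ∀ z ∈ ball (0 : ℂ) 1,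
      ‖c * z * deriv w z / (1 + c * w z)‖ <
        ‖c‖ * n * ρ / (1 + ‖c‖ * ρ)) :
    ∀ z ∈ ball (0 : ℂ) 1, ‖w z‖ < ρ := by
  intro z hz
  set u : ℂ → ℂ := fun z => 1 + c * w z with hu_def
  set M := ‖c‖ * n * ρ / (1 + ‖c‖ * ρ)
  have hu : DifferentiableOn ℂ u (ball 0 1) := (hw.differentiableOn.const_mul c).const_add 1
  have hmul_logDeriv (ζ : ℂ) : ζ * logDeriv u ζ = c * ζ * deriv w ζ / (1 + c * w ζ) := by
    rw [logDeriv_apply, hu_def, deriv_const_add, deriv_const_mul_field', mul_div_assoc]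
    ring
  have hzero_u : ∀ k < n - 1, iteratedDeriv (k + 1) u 0 = 0 := fun k hk => by
    rw [iteratedDeriv_const_add k.succ_pos, iteratedDeriv_const_mul_field, hzero _ (by omega),
      mul_zero]
  obtain ⟨ξ, hξ, hξ_le⟩ := exists_eq_exp_of_norm_logDeriv_le hu hden
    (by simp [u, by simpa using hzero 0 hn])
    (fun ζ hζ => norm_logDeriv_le_of_norm_mul_logDeriv_le hu hden hzero_u
      (fun ζ hζ => (hmul_logDeriv ζ ▸ h ζ hζ).le) hζ) hz
  rw [← Nat.cast_add_one, Nat.sub_add_cancel hn] at hξ_le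
  have hx : 0 < ‖c‖ * ρ := mul_pos (norm_pos_iff.mpr hc) (by linarith)
  have hξ_lt : ‖ξ‖ < ‖c‖ * ρ / (1 + ‖c‖ * ρ) := calc
    ‖ξ‖ ≤ M * ‖z‖ ^ n / n := hξ_le
    _ < M * 1 / n := by
      gcongr
      exact pow_lt_one₀ (norm_nonneg z) (mem_ball_zero_iff.mp hz) (by omega)
    _ = ‖c‖ * ρ / (1 + ‖c‖ * ρ) := by
      simp only [M]
      field_simp
  have hcw := norm_exp_sub_one_lt_of_norm_lt hx.le hξ_lt
  rw [← hξ, hu_def, add_sub_cancel_left, norm_mul] at hcw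
  exact lt_of_mul_lt_mul_left hcw (norm_nonneg c)
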